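/- For each vector v ∈ V_d there exists a unique generalized complete Taylor operator T̃ such that T̃ v = 0 (the annihilator of v). -/

import Mathlib

open Polynomial

/-- The falling factorial polynomial `(x)_j = x(x-1)⋯(x-j+1)`. -/
noncomputable def fall (j : ℕ) : Polynomial ℝ :=
  ∏ k ∈ Finset.range j, (X - C (k : ℝ))

/-- The normalized falling factorial `[x]_j = (x)_j / j!`. -/
noncomputable def nfall (j : ℕ) : Polynomial ℝ :=
  ((j.factorial : ℝ))⁻¹ • fall j

/-- The forward difference operator `Δp(x) = p(x+1) - p(x)`. -/
noncomputable def fdiff (p : Polynomial ℝ) : Polynomial ℝ :=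
  p.comp (X + 1) - p

/-- Action of a generalized complete Taylor operator with constant coefficients `s`
on a vector of polynomials `v`, indexed by degree: the component of degree `j` is
`Δ(v j) + ∑_{k<j} s j k • v k`.  (In the matrix picture, the constants `s j k`, `k < j`,
are the strictly upper triangular entries of the operator written for the reversed
vector `[v_d, …, v_0]`; `s j (j-1) = -1` corresponds to the `-1` superdiagonal.) -/
noncomputable def tApply (s : ℕ → ℕ → ℝ) (v : ℕ → Polynomial ℝ) (j : ℕ) : Polynomial ℝ :=
  fdiff (v j) + ∑ k ∈ Finset.range j, C (s j k) * v k

/-- `s` encodes a generalized complete Taylor operator of order `d`: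
only the entries `s j k` with `k < j ≤ d` may be nonzero, and the entries
corresponding to the superdiagonal (in the reversed ordering) equal `-1`. -/
def IsTaylorOp (d : ℕ) (s : ℕ → ℕ → ℝ) : Prop :=
  (∀ j k, j ≤ k ∨ d < j → s j k = 0) ∧ ∀ j < d, s (j + 1) j = -1

/-- Membership in `V_d`: `v = (v_d, …, v_0)` with `v_j = [·]_j + u_j`, `deg u_j ≤ j - 1`
(so in particular `v_0 = 1`). -/
def MemV (d : ℕ) (v : ℕ → Polynomial ℝ) : Prop :=
  ∀ j ≤ d, (v j - nfall j).degree < (j : WithBot ℕ)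

/-- `s` annihilates the polynomial vector `v` up to order `d`: `T̃ v = 0`. -/
def Annihilates (d : ℕ) (s : ℕ → ℕ → ℝ) (v : ℕ → Polynomial ℝ) : Prop :=
  ∀ j ≤ d, tApply s v j = 0

/-- `V = (v_0, …, v_d)` (with `V j k` the degree-`k` component of `v_j`) is a chain of
length `d+1`: each `v_j ∈ V_j` and the compatibility condition holds, i.e. applying the
annihilator `T̃(v_j)` of `v_j` to the shifted vector `(v_{j+1,j+1}, …, v_{j+1,1})`
yields a vector of constant polynomials. -/
def IsPolyChain (d : ℕ) (V : ℕ → ℕ → Polynomial ℝ) : Prop :=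
  (∀ j ≤ d, MemV j (V j)) ∧
    ∀ j < d, ∀ s : ℕ → ℕ → ℝ, IsTaylorOp j s → Annihilates j s (V j) →
      ∀ i ≤ j, ∃ c : ℝ, tApply s (fun k => V (j + 1) (k + 1)) i = C c


/-!
Since `v j - [x]_j` has degree `< j`, each `v j` (`j ≤ d`) has degree exactly `j` and leading
coefficient `1 / j!`; hence `v 0, …, v (j - 1)` is a basis of the polynomials of degree `< j`.
The forward difference lowers degrees, so row `j` of `T̃ v = 0`, namely
`∑_{k<j} s j k • v k = -Δ (v j)`, has exactly one solution. Its coefficient of `x ^ (j - 1)`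
gives `s j (j - 1) / (j - 1)! = -j / j!`, the `-1` on the superdiagonal.
-/

open Finset

lemma fdiff_eq_taylor_sub (p : ℝ[X]) : fdiff p = taylor 1 p - p := by
  rw [fdiff, taylor_apply, C_1]

lemma degree_fdiff_lt {p : ℝ[X]} {n : ℕ} (h : p.degree ≤ n) : (fdiff p).degree < n := by
  rcases eq_or_ne p 0 with rfl | hp
  · simp [fdiff]
  rw [fdiff_eq_taylor_sub]
  exact (degree_sub_lt_left (degree_taylor p 1) (by rwa [Ne, taylor_eq_zero])
    (leadingCoeff_taylor 1 p)).trans_le (by rwa [degree_taylor])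

lemma coeff_fdiff {p : ℝ[X]} {n : ℕ} (h : p.natDegree ≤ n + 1) :
    (fdiff p).coeff n = (n + 1) * p.coeff (n + 1) := by
  have hdeg : (hasseDeriv n p).natDegree < 2 := by rw [natDegree_hasseDeriv]; omega
  rw [fdiff_eq_taylor_sub, coeff_sub, taylor_coeff, eval_eq_sum_range' hdeg]
  simp [hasseDeriv_coeff, sum_range_succ, add_comm 1 n]

lemma monic_fall (j : ℕ) : (fall j).Monic :=
  monic_prod_of_monic _ _ fun _ _ => monic_X_sub_C _

lemma natDegree_fall (j : ℕ) : (fall j).natDegree = j := by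
  rw [fall, natDegree_prod _ _ fun _ _ => X_sub_C_ne_zero _]
  simp only [natDegree_X_sub_C, sum_const, card_range, smul_eq_mul, mul_one]

lemma nfall_eq_C_mul (j : ℕ) : nfall j = C (j.factorial : ℝ)⁻¹ * fall j := by
  rw [nfall, smul_eq_C_mul]

lemma degree_nfall (j : ℕ) : (nfall j).degree = j := by
  rw [nfall_eq_C_mul, degree_C_mul (by positivity), degree_eq_natDegree (monic_fall j).ne_zero,
    natDegree_fall]

lemma coeff_nfall_self (j : ℕ) : (nfall j).coeff j = (j.factorial : ℝ)⁻¹ := by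
  have hlead := (monic_fall j).coeff_natDegree
  rw [natDegree_fall] at hlead
  rw [nfall, coeff_smul, hlead, smul_eq_mul, mul_one]

namespace Polynomial.Sequence

lemma coeff_sum_range_succ {R : Type*} [Semiring R] (S : Sequence R) (c : ℕ → R) (n : ℕ) :
    (∑ k ∈ range (n + 1), C (c k) * S k).coeff n = c n * (S n).coeff n := by
  rw [finsetSum_coeff, sum_range_succ, sum_eq_zero fun k hk => ?_, zero_add, coeff_C_mul]
  rw [coeff_C_mul, coeff_eq_zero_of_degree_lt (by simpa using mem_range.1 hk), mul_zero]

lemma eq_zero_of_sum_range_eq_zero {R : Type*} [Ring R] [IsDomain R] (S : Sequence R)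
    {n : ℕ} {c : ℕ → R} (h : ∑ k ∈ range n, C (c k) * S k = 0) {k : ℕ} (hk : k < n) :
    c k = 0 :=
  linearIndependent_iff'.1 S.linearIndependent (range n) c
    (by simpa [smul_eq_C_mul] using h) k (mem_range.2 hk)

lemma exists_sum_range_eq {K : Type*} [Field K] (S : Sequence K) {n : ℕ} {p : K[X]}
    (hp : p.degree < n) : ∃ c : ℕ → K, ∑ k ∈ range n, C (c k) * S k = p := by
  have hmem : p ∈ Submodule.span K (S '' ↑(range n)) := by
    rw [coe_range, S.span_degreeLT fun i _ => (leadingCoeff_ne_zero.2 (S.ne_zero i)).isUnit]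
    exact mem_degreeLT.2 hp
  obtain ⟨l, hl, rfl⟩ := Finsupp.mem_span_image_iff_linearCombination K |>.1 hmem
  refine ⟨l, ?_⟩
  rw [Finsupp.linearCombination_apply, Finsupp.sum_of_support_subset l hl]
  · simp [smul_eq_C_mul]
  · simp

end Polynomial.Sequence

namespace MemV

variable {d : ℕ} {v : ℕ → ℝ[X]}

lemma degree_eq (hv : MemV d v) {j : ℕ} (hj : j ≤ d) : (v j).degree = j := by
  have hlower := hv j hj
  rw [← degree_nfall j] at hlower ⊢
  rw [← sub_add_cancel (v j) (nfall j), degree_add_eq_right_of_degree_lt hlower]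

lemma coeff_self (hv : MemV d v) {j : ℕ} (hj : j ≤ d) :
    (v j).coeff j = (j.factorial : ℝ)⁻¹ := by
  rw [← coeff_nfall_self, ← sub_eq_zero, ← coeff_sub]
  exact coeff_eq_zero_of_degree_lt (hv j hj)

noncomputable def toSequence (hv : MemV d v) : Sequence ℝ where
  elems' k := if k ≤ d then v k else X ^ k
  degree_eq' k := by
    split_ifs with hk
    · exact hv.degree_eq hk
    · exact degree_X_pow k

lemma toSequence_apply (hv : MemV d v) {k : ℕ} (hk : k ≤ d) : hv.toSequence k = v k :=
  if_pos hk

lemma sum_toSequence (hv : MemV d v) {n : ℕ} (hn : n ≤ d + 1) (c : ℕ → ℝ) :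
    ∑ k ∈ range n, C (c k) * hv.toSequence k = ∑ k ∈ range n, C (c k) * v k :=
  sum_congr rfl fun k hk => by rw [hv.toSequence_apply (by grind)]

lemma eq_of_sum_range_eq (hv : MemV d v) {n : ℕ} (hn : n ≤ d + 1) {a b : ℕ → ℝ}
    (h : ∑ k ∈ range n, C (a k) * v k = ∑ k ∈ range n, C (b k) * v k) {k : ℕ}
    (hk : k < n) : a k = b k := by
  refine sub_eq_zero.1 (hv.toSequence.eq_zero_of_sum_range_eq_zero (c := a - b) ?_ hk)
  simp only [Pi.sub_apply, C_sub, sub_mul, sum_sub_distrib, hv.sum_toSequence hn, h, sub_self]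

lemma exists_sum_range_eq_neg_fdiff (hv : MemV d v) {j : ℕ} (hj : j ≤ d) :
    ∃ c : ℕ → ℝ, ∑ k ∈ range j, C (c k) * v k = -fdiff (v j) := by
  obtain ⟨c, hc⟩ := hv.toSequence.exists_sum_range_eq (n := j) (p := -fdiff (v j))
    (by rw [degree_neg]; exact degree_fdiff_lt (hv.degree_eq hj).le)
  exact ⟨c, by rwa [← hv.sum_toSequence (by omega)]⟩

lemma eq_neg_one_of_sum_range_eq_neg_fdiff (hv : MemV d v) {j : ℕ} (hj : j < d) {c : ℕ → ℝ}
    (h : ∑ k ∈ range (j + 1), C (c k) * v k = -fdiff (v (j + 1))) : c j = -1 := by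
  have hcoeff : (∑ k ∈ range (j + 1), C (c k) * v k).coeff j =
      (-fdiff (v (j + 1))).coeff j := by
    rw [h]
  rw [← hv.sum_toSequence (by omega), Sequence.coeff_sum_range_succ, coeff_neg,
    coeff_fdiff (natDegree_eq_of_degree_eq_some (hv.degree_eq hj)).le,
    hv.toSequence_apply hj.le, hv.coeff_self hj.le, hv.coeff_self hj,
    Nat.factorial_succ] at hcoeff
  push_cast at hcoeff
  field_simp at hcoeff
  linarith

end MemV

lemma annihilates_iff {d : ℕ} {s : ℕ → ℕ → ℝ} {v : ℕ → ℝ[X]} :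
    Annihilates d s v ↔ ∀ j ≤ d, ∑ k ∈ range j, C (s j k) * v k = -fdiff (v j) := by
  simp only [Annihilates, tApply, add_comm (fdiff _), ← eq_neg_iff_add_eq_zero]

/-- For each `v ∈ V_d` there is a unique generalized complete Taylor operator
annihilating `v` (the annihilator of `v`). -/
theorem taylor_annihilator_unique (d : ℕ) (v : ℕ → Polynomial ℝ) (hv : MemV d v) :
    ∃! s : ℕ → ℕ → ℝ, IsTaylorOp d s ∧ Annihilates d s v := by
  choose c hc using fun j (hj : j ≤ d) => hv.exists_sum_range_eq_neg_fdiff hj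
  let s : ℕ → ℕ → ℝ := fun j k => if h : k < j ∧ j ≤ d then c j h.2 k else 0
  have hs : ∀ j ≤ d, ∑ k ∈ range j, C (s j k) * v k = -fdiff (v j) := fun j hj => by
    rw [← hc j hj]
    exact sum_congr rfl fun k hk => by simp only [s, dif_pos (And.intro (mem_range.1 hk) hj)]
  have hop : IsTaylorOp d s := ⟨fun j k h => dif_neg (by omega),
    fun j hj => hv.eq_neg_one_of_sum_range_eq_neg_fdiff hj (hs (j + 1) hj)⟩
  refine ⟨s, ⟨hop, annihilates_iff.2 hs⟩, ?_⟩
  rintro t ⟨ht, hann⟩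
  funext j k
  by_cases hkj : k < j ∧ j ≤ d
  · exact hv.eq_of_sum_range_eq (by omega)
      ((annihilates_iff.1 hann j hkj.2).trans (hs j hkj.2).symm) hkj.1
  · simp only [s, dif_neg hkj]
    exact ht.1 j k (by omega)
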